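/- Let A, p be real numbers with A ≠ 0, and let u₁, u₂ be real numbers with u₁³ ≠ u₂³. Then it is impossible that both A·(4p³ + 6p² + p + 1) = (−2p³ + 3p² + 8p − 1)·u₁³ and A·(4p³ + 6p² + p + 1) = (−2p³ + 3p² + 8p − 1)·u₂³ hold. -/

import Mathlib

/-! The two cubics have no common real root, since their sum factors as `p (2p + 3) (p + 3)`
and the first cubic is nonzero at `0`, `-3/2` and `-3`. But if `A q = r u³` held for two distinct
values of `u³`, then `r = 0`, and then `A q = 0` with `A ≠ 0` forces `q = 0`. -/

theorem eq_zero_and_eq_zero_of_mul_eq_mul_of_ne {R : Type*} [CommRing R] [NoZeroDivisors R]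
    {A c d x y : R} (hA : A ≠ 0) (hx : A * c = d * x) (hy : A * c = d * y) (hxy : x ≠ y) :
    c = 0 ∧ d = 0 := by
  have hd : d = 0 := by
    by_contra hd
    exact hxy (mul_left_cancel₀ hd (hx.symm.trans hy))
  refine ⟨?_, hd⟩
  rw [hd, zero_mul] at hx
  exact (mul_eq_zero.mp hx).resolve_left hA

theorem cubics_no_common_root (p : ℝ) :
    ¬ (4 * p ^ 3 + 6 * p ^ 2 + p + 1 = 0 ∧ -2 * p ^ 3 + 3 * p ^ 2 + 8 * p - 1 = 0) := by
  rintro ⟨hq, hr⟩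
  have hsum : p * (2 * p + 3) * (p + 3) = 0 := by linear_combination hq + hr
  rcases mul_eq_zero.mp hsum with h | h
  · rcases mul_eq_zero.mp h with h | h
    · rw [h] at hq
      norm_num at hq
    · rw [show p = -3 / 2 by linarith] at hq
      norm_num at hq
  · rw [show p = -3 by linarith] at hq
    norm_num at hq

theorem stmt_4 (A p u₁ u₂ : ℝ) (hA : A ≠ 0) (hu : u₁ ^ 3 ≠ u₂ ^ 3) :
    ¬ (A * (4 * p ^ 3 + 6 * p ^ 2 + p + 1)
        = (-2 * p ^ 3 + 3 * p ^ 2 + 8 * p - 1) * u₁ ^ 3 ∧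
       A * (4 * p ^ 3 + 6 * p ^ 2 + p + 1)
        = (-2 * p ^ 3 + 3 * p ^ 2 + 8 * p - 1) * u₂ ^ 3) := by
  rintro ⟨h₁, h₂⟩
  exact cubics_no_common_root p (eq_zero_and_eq_zero_of_mul_eq_mul_of_ne hA h₁ h₂ hu)
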